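/- The output approximation error satisfies |C(x - x̂)| ≤ (‖r_du‖ · ‖E^{-1}‖ + ‖x̂_du‖) · ‖r_pr‖, where ‖E^{-1}‖ is the operator norm of E^{-1}, ‖·‖ the Euclidean norm, r_du = -C^T - E^T x̂_du, and r_pr = A x0 + f(x0) + B u - E x̂. -/

import Mathlib

open Matrix

noncomputable def enorm₂ {n : ℕ} (v : Fin n → ℝ) : ℝ :=
  ‖(WithLp.equiv 2 (Fin n → ℝ)).symm v‖

noncomputable def opNorm {m n : ℕ} (M : Matrix (Fin m) (Fin n) ℝ) : ℝ :=
  ‖LinearMap.toContinuousLinearMap (Matrix.toEuclideanLin M)‖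

lemma cs {n : ℕ} (v w : Fin n → ℝ) : |v ⬝ᵥ w| ≤ enorm₂ v * enorm₂ w := by
  have h := abs_real_inner_le_norm ((WithLp.equiv 2 (Fin n → ℝ)).symm v)
    ((WithLp.equiv 2 (Fin n → ℝ)).symm w)
  simpa [PiLp.inner_apply, dotProduct, enorm₂, mul_comm] using h

lemma opnorm_bound {n m : ℕ} (M : Matrix (Fin m) (Fin n) ℝ) (v : Fin n → ℝ) :
    enorm₂ (M.mulVec v) ≤ opNorm M * enorm₂ v := by
  have h := (LinearMap.toContinuousLinearMap (Matrix.toEuclideanLin M)).le_opNorm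
    ((WithLp.equiv 2 (Fin n → ℝ)).symm v)
  simpa [enorm₂, opNorm, Matrix.toEuclideanLin_apply] using h

theorem stmt2 {n m : ℕ} (E A : Matrix (Fin n) (Fin n) ℝ) (hE : IsUnit E)
    (B : Matrix (Fin n) (Fin m) ℝ) (c : Fin n → ℝ) (f : (Fin n → ℝ) → (Fin n → ℝ))
    (x0 x xhat xhatdu xdu : Fin n → ℝ) (u : Fin m → ℝ)
    (hprimal : E.mulVec x = A.mulVec x0 + f x0 + B.mulVec u)
    (hdual : Eᵀ.mulVec xdu = -c)
    (rpr rdu : Fin n → ℝ)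
    (hrpr : rpr = A.mulVec x0 + f x0 + B.mulVec u - E.mulVec xhat)
    (hrdu : rdu = -c - Eᵀ.mulVec xhatdu) :
    |c ⬝ᵥ (x - xhat)| ≤ (enorm₂ rdu * opNorm E⁻¹ + enorm₂ xhatdu) * enorm₂ rpr := by
  have hdet : IsUnit E.det := (Matrix.isUnit_iff_isUnit_det E).mp hE
  have hEinv : E * E⁻¹ = 1 := Matrix.mul_nonsing_inv E hdet
  -- E (x - xhat) = rpr
  have hEr : E.mulVec (x - xhat) = rpr := by
    rw [Matrix.mulVec_sub, hprimal, hrpr]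
  -- Eᵀ (xdu - xhatdu) = rdu
  have hEd : Eᵀ.mulVec (xdu - xhatdu) = rdu := by
    rw [Matrix.mulVec_sub, hdual, hrdu]
  -- xdu - xhatdu = (E⁻¹)ᵀ rdu
  have hdiff : xdu - xhatdu = (E⁻¹)ᵀ.mulVec rdu := by
    rw [← hEd, Matrix.mulVec_mulVec, ← Matrix.transpose_mul, hEinv, Matrix.transpose_one,
      Matrix.one_mulVec]
  -- c ⬝ (x - xhat) = -(xdu ⬝ rpr)
  have hc : c ⬝ᵥ (x - xhat) = -(xdu ⬝ᵥ rpr) := by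
    have : c = -(Eᵀ.mulVec xdu) := by rw [hdual, neg_neg]
    rw [this, ← hEr, neg_dotProduct, Matrix.mulVec_transpose,
      ← Matrix.dotProduct_mulVec]
  have hsplit : xdu ⬝ᵥ rpr = xhatdu ⬝ᵥ rpr + rdu ⬝ᵥ (E⁻¹.mulVec rpr) := by
    have h1 : (xdu - xhatdu) ⬝ᵥ rpr = rdu ⬝ᵥ (E⁻¹.mulVec rpr) := by
      rw [hdiff, Matrix.mulVec_transpose, ← Matrix.dotProduct_mulVec]
    have := sub_dotProduct xdu xhatdu rpr
    linarith [h1, this]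
  rw [hc, abs_neg, hsplit]
  have h2 : |rdu ⬝ᵥ (E⁻¹.mulVec rpr)| ≤ enorm₂ rdu * (opNorm E⁻¹ * enorm₂ rpr) := by
    calc |rdu ⬝ᵥ (E⁻¹.mulVec rpr)| ≤ enorm₂ rdu * enorm₂ (E⁻¹.mulVec rpr) := cs _ _
      _ ≤ enorm₂ rdu * (opNorm E⁻¹ * enorm₂ rpr) := by
          have hn : (0:ℝ) ≤ enorm₂ rdu := norm_nonneg _
          exact mul_le_mul_of_nonneg_left (opnorm_bound _ _) hn
  have h1 : |xhatdu ⬝ᵥ rpr| ≤ enorm₂ xhatdu * enorm₂ rpr := cs _ _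
  calc |xhatdu ⬝ᵥ rpr + rdu ⬝ᵥ (E⁻¹.mulVec rpr)|
      ≤ |xhatdu ⬝ᵥ rpr| + |rdu ⬝ᵥ (E⁻¹.mulVec rpr)| := abs_add_le _ _
    _ ≤ enorm₂ xhatdu * enorm₂ rpr + enorm₂ rdu * (opNorm E⁻¹ * enorm₂ rpr) := by linarith
    _ = (enorm₂ rdu * opNorm E⁻¹ + enorm₂ xhatdu) * enorm₂ rpr := by ring
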